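/- Let σ ≥ 0 and 0 < ε < 1/8. Then there is a constant C > 0 such that for all integers m, k with m ≠ k and every τ ∈ ℝ, ∑_{n∈ℤ} ⟨n+m⟩^{2σ} ⟨n⟩^{-2σ} ⟨-τ + (n+k)² + n²⟩^{-(1-2ε)} ⟨τ - (n+k)² + m² + (n+m)²⟩^{-(1+2ε)} ≤ C ⟨m⟩^{2σ - (4/3)(1-4ε)}. -/
import Mathlib


/-- The Japanese bracket `⟨x⟩ = (1 + x²)^{1/2}`. -/
noncomputable def jb (x : ℝ) : ℝ := Real.sqrt (1 + x ^ 2)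

lemma jb_pos (x : ℝ) : 0 < jb x :=
  Real.sqrt_pos.2 (by positivity)

lemma one_le_jb (x : ℝ) : 1 ≤ jb x := by
  rw [show (1:ℝ) = Real.sqrt 1 from (Real.sqrt_one).symm]
  exact Real.sqrt_le_sqrt (by nlinarith)

lemma jb_sq (x : ℝ) : jb x ^ 2 = 1 + x ^ 2 :=
  Real.sq_sqrt (by positivity)

lemma abs_le_jb (x : ℝ) : |x| ≤ jb x := by
  rw [show |x| = Real.sqrt (x^2) from (Real.sqrt_sq_eq_abs x).symm]
  exact Real.sqrt_le_sqrt (by nlinarith)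

lemma jb_le_jb {x y : ℝ} (h : |x| ≤ |y|) : jb x ≤ jb y := by
  apply Real.sqrt_le_sqrt
  have := sq_abs x; have := sq_abs y
  nlinarith [abs_nonneg x, abs_nonneg y]

lemma jb_neg (x : ℝ) : jb (-x) = jb x := by
  unfold jb; ring_nf

lemma le_jb_of_le (x : ℝ) {t : ℝ} (h : t ≤ |x|) : (1 + t) / 2 ≤ jb x := by
  rcases le_total t 1 with h1 | h1
  · linarith [one_le_jb x]
  · linarith [le_trans h (abs_le_jb x)]

lemma jb_rpow_nonneg (x r : ℝ) : 0 ≤ jb x ^ r := (Real.rpow_pos_of_pos (jb_pos x) r).le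

lemma summable_majorant {p : ℝ} (hp : 1 < p) :
    Summable (fun j : ℤ => (1 + |(j:ℝ)|) ^ (-p)) := by
  have h1 : Summable (fun j : ℤ => |(j:ℝ)| ^ (-p) + if j = 0 then (1:ℝ) else 0) := by
    apply (Real.summable_abs_int_rpow hp).add
    exact summable_of_ne_finset_zero (s := {0}) (by intro b hb; simp at hb ⊢; exact hb)
  apply Summable.of_nonneg_of_le (fun j => by positivity) _ h1
  intro j
  rcases eq_or_ne j 0 with rfl | hj
  · simp; exact Real.rpow_nonneg le_rfl _
  · have h0 : (0:ℝ) < |(j:ℝ)| := by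
      simp only [abs_pos, ne_eq, Int.cast_eq_zero]; exact hj
    have h2 := Real.rpow_le_rpow_of_nonpos h0
      (by linarith [abs_nonneg (j:ℝ)] : |(j:ℝ)| ≤ 1 + |(j:ℝ)|) (by linarith : -p ≤ 0)
    simp only [hj, if_false, add_zero]
    exact h2

/-- Core lemma: uniform bound for `∑ jb(n+c)^{-p}`, `p > 1`. -/
lemma core_sum {p : ℝ} (hp : 1 < p) :
    ∃ K : ℝ, 0 < K ∧ ∀ c : ℝ,
      Summable (fun n : ℤ => jb ((n:ℝ) + c) ^ (-p)) ∧
      (∑' n : ℤ, jb ((n:ℝ) + c) ^ (-p)) ≤ K := by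
  set T : ℝ := ∑' j : ℤ, (1 + |(j:ℝ)|) ^ (-p) with hT
  have hTnn : 0 ≤ T := tsum_nonneg (fun j => by positivity)
  refine ⟨(3:ℝ) ^ p * T + 1, by positivity, fun c => ?_⟩
  set n₀ : ℤ := round (-c) with hn₀
  have hu : |(n₀:ℝ) + c| ≤ 1/2 := by
    have := abs_sub_round (-c)
    rw [abs_sub_comm] at this
    simpa [hn₀, add_comm] using this
  have key : ∀ j : ℤ, jb (((j + n₀ : ℤ) : ℝ) + c) ^ (-p) ≤ (3:ℝ)^p * (1 + |(j:ℝ)|) ^ (-p) := by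
    intro j
    have hargeq : ((j + n₀ : ℤ) : ℝ) + c = (j:ℝ) + ((n₀:ℝ) + c) := by push_cast; ring
    rw [hargeq]
    have habs : |(j:ℝ)| - 1/2 ≤ |((j:ℝ) + ((n₀:ℝ) + c))| := by
      have := abs_add_le ((j:ℝ) + ((n₀:ℝ) + c)) (-((n₀:ℝ) + c))
      simp only [add_neg_cancel_right, abs_neg] at this
      linarith
    have hjb : (1 + |(j:ℝ)|) / 3 ≤ jb ((j:ℝ) + ((n₀:ℝ) + c)) := by
      rcases le_total (|(j:ℝ)|) 2 with h2 | h2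
      · calc (1 + |(j:ℝ)|)/3 ≤ 1 := by linarith
          _ ≤ jb ((j:ℝ) + ((n₀:ℝ) + c)) := one_le_jb _
      · have := le_jb_of_le ((j:ℝ) + ((n₀:ℝ) + c)) (t := |(j:ℝ)| - 1/2) habs
        linarith
    have h0 : (0:ℝ) < (1 + |(j:ℝ)|)/3 := by positivity
    have hstep := Real.rpow_le_rpow_of_nonpos h0 hjb (by linarith : -p ≤ 0)
    have h1nn : (0:ℝ) ≤ 1 + |(j:ℝ)| := by positivity
    calc jb ((j:ℝ) + ((n₀:ℝ) + c)) ^ (-p) ≤ ((1 + |(j:ℝ)|)/3) ^ (-p) := hstep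
      _ = (1 + |(j:ℝ)|) ^ (-p) / (3:ℝ) ^ (-p) := Real.div_rpow h1nn (by norm_num) _
      _ = (3:ℝ)^p * (1 + |(j:ℝ)|) ^ (-p) := by
          rw [Real.rpow_neg (by norm_num : (0:ℝ) ≤ 3)]; field_simp
  have hmaj : Summable (fun j : ℤ => (3:ℝ)^p * (1 + |(j:ℝ)|) ^ (-p)) :=
    (summable_majorant hp).mul_left _
  have hsum' : Summable (fun j : ℤ => jb (((j + n₀ : ℤ) : ℝ) + c) ^ (-p)) :=
    Summable.of_nonneg_of_le (fun j => jb_rpow_nonneg _ _) key hmaj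
  have hequiv : Summable (fun n : ℤ => jb ((n:ℝ) + c) ^ (-p)) := by
    have := (Equiv.addRight n₀).summable_iff
      (f := fun n : ℤ => jb ((n:ℝ) + c) ^ (-p))
    exact this.mp hsum'
  refine ⟨hequiv, ?_⟩
  have hre : (∑' n : ℤ, jb ((n:ℝ) + c) ^ (-p))
      = ∑' j : ℤ, jb (((j + n₀ : ℤ) : ℝ) + c) ^ (-p) :=
    ((Equiv.addRight n₀).tsum_eq (f := fun n : ℤ => jb ((n:ℝ) + c) ^ (-p))).symm
  rw [hre]
  calc (∑' j : ℤ, jb (((j + n₀ : ℤ) : ℝ) + c) ^ (-p))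
      ≤ ∑' j : ℤ, (3:ℝ)^p * (1 + |(j:ℝ)|) ^ (-p) := Summable.tsum_le_tsum key hsum' hmaj
    _ = (3:ℝ)^p * T := tsum_mul_left
    _ ≤ (3:ℝ)^p * T + 1 := by linarith

lemma sq_sub_abs {a b : ℝ} (ha : 0 ≤ a) (hb : 0 ≤ b) : (a - b) ^ 2 ≤ |a ^ 2 - b ^ 2| := by
  rcases abs_cases (a ^ 2 - b ^ 2) with ⟨h, h2⟩ | ⟨h, h2⟩
  · have hab : b ≤ a := by nlinarith
    nlinarith
  · have hab : a ≤ b := by nlinarith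
    nlinarith

/-- `jb x ≥ (1 + t)/2` whenever `t ≤ max 1 |x|`. -/
lemma half_le_jb {x t : ℝ} (h : t ≤ |x|) : (1 + t) / 2 ≤ jb x := by
  rcases le_total t 1 with h1 | h1
  · linarith [one_le_jb x]
  · linarith [le_trans h (abs_le_jb x)]

/-- Linear lemma. -/
lemma lin_sum {p : ℝ} (hp : 1 < p) :
    ∃ K : ℝ, 0 < K ∧ ∀ (d : ℤ), d ≠ 0 → ∀ c : ℝ,
      Summable (fun n : ℤ => jb ((d:ℝ) * n + c) ^ (-p)) ∧
      (∑' n : ℤ, jb ((d:ℝ) * n + c) ^ (-p)) ≤ K := by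
  obtain ⟨K, hK, hKc⟩ := core_sum hp
  refine ⟨K, hK, fun d hd c => ?_⟩
  have hd1 : (1:ℝ) ≤ |(d:ℝ)| := by
    rw [← Int.cast_abs]
    exact_mod_cast Int.one_le_abs (by simpa using hd)
  have hd0 : (d:ℝ) ≠ 0 := Int.cast_ne_zero.2 hd
  have key : ∀ n : ℤ, jb ((d:ℝ) * n + c) ^ (-p) ≤ jb ((n:ℝ) + c / d) ^ (-p) := by
    intro n
    have heq : (d:ℝ) * n + c = d * ((n:ℝ) + c / d) := by field_simp
    have habs : |(n:ℝ) + c / d| ≤ |(d:ℝ) * n + c| := by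
      rw [heq, abs_mul]
      nlinarith [abs_nonneg ((n:ℝ) + c / d)]
    exact Real.rpow_le_rpow_of_nonpos (jb_pos _) (jb_le_jb habs) (by linarith)
  obtain ⟨hs, hb⟩ := hKc (c / d)
  have hsum : Summable (fun n : ℤ => jb ((d:ℝ) * n + c) ^ (-p)) :=
    Summable.of_nonneg_of_le (fun n => jb_rpow_nonneg _ _) key hs
  exact ⟨hsum, le_trans (Summable.tsum_le_tsum key hsum hs) hb⟩

/-- Quadratic lemma. -/
lemma quad_sum {γ : ℝ} (hγ : 1 < 2 * γ) :
    ∃ K : ℝ, 0 < K ∧ ∀ (k : ℤ) (c : ℝ),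
      Summable (fun n : ℤ => jb (2 * (n:ℝ)^2 + 2 * (k:ℝ) * n + c) ^ (-γ)) ∧
      (∑' n : ℤ, jb (2 * (n:ℝ)^2 + 2 * (k:ℝ) * n + c) ^ (-γ)) ≤ K := by
  have hγ0 : 0 < γ := by linarith
  obtain ⟨K, hK, hKc⟩ := core_sum hγ
  refine ⟨2 ^ γ * (K + K), by positivity, fun k c => ?_⟩
  obtain ⟨c', hc'⟩ : ∃ c', c' = c - (k:ℝ)^2 / 2 := ⟨_, rfl⟩
  obtain ⟨s, hs⟩ : ∃ s, s = Real.sqrt (max 0 (-c'/2)) := ⟨_, rfl⟩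
  have hs0 : 0 ≤ s := hs ▸ Real.sqrt_nonneg _
  have key : ∀ n : ℤ, jb (2 * (n:ℝ)^2 + 2 * (k:ℝ) * n + c) ^ (-γ)
      ≤ 2 ^ γ * (jb ((n:ℝ) + ((k:ℝ)/2 - s)) ^ (-(2*γ)) + jb ((n:ℝ) + ((k:ℝ)/2 + s)) ^ (-(2*γ))) := by
    intro n
    obtain ⟨x, hx⟩ : ∃ x, x = (n:ℝ) + (k:ℝ)/2 := ⟨_, rfl⟩
    obtain ⟨R, hRdef⟩ : ∃ R, R = 2 * x^2 + c' := ⟨_, rfl⟩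
    have hR : 2 * (n:ℝ)^2 + 2 * (k:ℝ) * n + c = R := by rw [hRdef, hx, hc']; ring
    -- |R| ≥ (|x| - s)^2
    have h1 : (|x| - s)^2 ≤ |R| := by
      rcases le_total 0 c' with hcp | hcn
      · have hs0' : s = 0 := by
          rw [hs, max_eq_left (by linarith : -c'/2 ≤ 0)]; exact Real.sqrt_zero
        rw [hs0']
        rcases abs_cases R with ⟨h, _⟩ | ⟨_, h⟩ <;> nlinarith [sq_abs x]
      · have hss : s ^ 2 = -c'/2 := by
          rw [hs, Real.sq_sqrt (le_max_left _ _), max_eq_right (by linarith : (0:ℝ) ≤ -c'/2)]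
        have e1 : |R| = 2 * |(|x|) ^ 2 - s ^ 2| := by
          rw [hRdef, show 2 * x^2 + c' = 2 * (x^2 - s^2) by linear_combination 2 * hss,
            abs_mul, sq_abs]
          simp [abs_of_nonneg]
        rw [e1]
        have h5 := sq_sub_abs (abs_nonneg x) hs0
        have h6 := abs_nonneg ((|x|)^2 - s^2)
        linarith
    -- jb R ≥ jb(|x| - s)^2 / 2
    have h2 : jb (|x| - s) ^ (2:ℕ) / 2 ≤ jb R := by
      have ha : max 1 (|R|) ≤ jb R := max_le (one_le_jb R) (abs_le_jb R)
      have hb' : (1 + (|x| - s)^2) / 2 ≤ max 1 (|R|) := by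
        rcases le_total ((|x| - s)^2) 1 with h | h
        · exact le_trans (by linarith) (le_max_left _ _)
        · exact le_trans (by linarith : (1 + (|x| - s)^2)/2 ≤ (|x| - s)^2)
            (le_trans h1 (le_max_right _ _))
      rw [jb_sq]
      linarith
    have h3 : jb R ^ (-γ) ≤ 2 ^ γ * jb (|x| - s) ^ (-(2*γ)) := by
      have h0 : (0:ℝ) < jb (|x| - s) ^ (2:ℕ) / 2 := div_pos (pow_pos (jb_pos _) 2) two_pos
      have hstep := Real.rpow_le_rpow_of_nonpos h0 h2 (by linarith : -γ ≤ 0)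
      have heq2 : (jb (|x| - s) ^ (2:ℕ) / 2 : ℝ) ^ (-γ) = 2 ^ γ * jb (|x| - s) ^ (-(2*γ)) := by
        rw [Real.div_rpow (by positivity) (by norm_num),
          Real.rpow_neg (by norm_num : (0:ℝ) ≤ 2),
          ← Real.rpow_natCast (jb (|x| - s)) 2, ← Real.rpow_mul (jb_pos _).le]
        push_cast
        rw [show (2:ℝ) * (-γ) = -(2*γ) by ring]
        field_simp
      rw [heq2] at hstep
      exact hstep
    have h4 : jb (|x| - s) ^ (-(2*γ)) ≤
        jb ((n:ℝ) + ((k:ℝ)/2 - s)) ^ (-(2*γ)) + jb ((n:ℝ) + ((k:ℝ)/2 + s)) ^ (-(2*γ)) := by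
      rcases le_total 0 x with hxp | hxn
      · have he : |x| - s = (n:ℝ) + ((k:ℝ)/2 - s) := by rw [abs_of_nonneg hxp, hx]; ring
        rw [he]
        exact le_add_of_le_of_nonneg le_rfl (jb_rpow_nonneg _ _)
      · have he : jb (|x| - s) = jb ((n:ℝ) + ((k:ℝ)/2 + s)) := by
          rw [abs_of_nonpos hxn, hx,
            show -((n:ℝ) + (k:ℝ)/2) - s = -((n:ℝ) + ((k:ℝ)/2 + s)) by ring, jb_neg]
        rw [he]
        exact le_add_of_nonneg_of_le (jb_rpow_nonneg _ _) le_rfl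
    calc jb (2 * (n:ℝ)^2 + 2 * (k:ℝ) * n + c) ^ (-γ) = jb R ^ (-γ) := by rw [hR]
      _ ≤ 2 ^ γ * jb (|x| - s) ^ (-(2*γ)) := h3
      _ ≤ _ := mul_le_mul_of_nonneg_left h4 (by positivity)
  obtain ⟨hs1, hb1⟩ := hKc ((k:ℝ)/2 - s)
  obtain ⟨hs2, hb2⟩ := hKc ((k:ℝ)/2 + s)
  have hmaj : Summable (fun n : ℤ => 2 ^ γ *
      (jb ((n:ℝ) + ((k:ℝ)/2 - s)) ^ (-(2*γ)) + jb ((n:ℝ) + ((k:ℝ)/2 + s)) ^ (-(2*γ)))) :=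
    ((hs1.add hs2).mul_left _)
  have hsum : Summable (fun n : ℤ => jb (2 * (n:ℝ)^2 + 2 * (k:ℝ) * n + c) ^ (-γ)) :=
    Summable.of_nonneg_of_le (fun n => jb_rpow_nonneg _ _) key hmaj
  refine ⟨hsum, ?_⟩
  calc (∑' n : ℤ, jb (2 * (n:ℝ)^2 + 2 * (k:ℝ) * n + c) ^ (-γ))
      ≤ ∑' n : ℤ, 2 ^ γ *
        (jb ((n:ℝ) + ((k:ℝ)/2 - s)) ^ (-(2*γ)) + jb ((n:ℝ) + ((k:ℝ)/2 + s)) ^ (-(2*γ))) :=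
        Summable.tsum_le_tsum key hsum hmaj
    _ = 2 ^ γ * ((∑' n : ℤ, jb ((n:ℝ) + ((k:ℝ)/2 - s)) ^ (-(2*γ)))
        + ∑' n : ℤ, jb ((n:ℝ) + ((k:ℝ)/2 + s)) ^ (-(2*γ))) := by
        rw [tsum_mul_left, Summable.tsum_add hs1 hs2]
    _ ≤ 2 ^ γ * (K + K) := by
        apply mul_le_mul_of_nonneg_left (by linarith) (by positivity)

/-- `(jb y ^ 2 / C)^(-t) = C^t * jb y^(-2t)`. -/
lemma jb_sq_div_rpow (y : ℝ) {Cb t : ℝ} (hC : 0 < Cb) :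
    ((jb y ^ (2:ℕ) / Cb : ℝ)) ^ (-t) = Cb ^ t * jb y ^ (-(2*t)) := by
  rw [Real.div_rpow (by positivity) hC.le, Real.rpow_neg hC.le,
    ← Real.rpow_natCast (jb y) 2, ← Real.rpow_mul (jb_pos _).le]
  push_cast
  rw [show (2:ℝ) * (-t) = -(2*t) by ring]
  field_simp

/-- Peetre-type inequality. -/
lemma peetre (a b : ℝ) {σ : ℝ} (hσ : 0 ≤ σ) :
    jb (a + b) ^ (2*σ) * jb a ^ (-(2*σ)) ≤ 2 ^ σ * jb b ^ (2*σ) := by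
  have h1 : jb (a + b) ≤ Real.sqrt 2 * (jb a * jb b) := by
    have h2 : (1:ℝ) + (a+b)^2 ≤ 2 * ((1 + a^2) * (1 + b^2)) := by nlinarith [sq_nonneg (a-b), sq_nonneg (a*b)]
    calc jb (a+b) ≤ Real.sqrt (2 * ((1 + a^2) * (1 + b^2))) := Real.sqrt_le_sqrt h2
      _ = Real.sqrt 2 * (jb a * jb b) := by
          rw [Real.sqrt_mul (by norm_num), Real.sqrt_mul (by positivity)]; rfl
  have h3 : jb (a + b) ^ (2*σ) ≤ (Real.sqrt 2) ^ (2*σ) * (jb a ^ (2*σ) * jb b ^ (2*σ)) := by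
    calc jb (a + b) ^ (2*σ) ≤ (Real.sqrt 2 * (jb a * jb b)) ^ (2*σ) :=
          Real.rpow_le_rpow (jb_pos _).le h1 (by linarith)
      _ = (Real.sqrt 2) ^ (2*σ) * (jb a ^ (2*σ) * jb b ^ (2*σ)) := by
          rw [Real.mul_rpow (Real.sqrt_nonneg 2) (mul_nonneg (jb_pos a).le (jb_pos b).le),
            Real.mul_rpow (jb_pos a).le (jb_pos b).le]
  have h4 : (Real.sqrt 2) ^ (2*σ) = 2 ^ σ := by
    rw [Real.sqrt_eq_rpow, ← Real.rpow_mul (by norm_num)]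
    congr 1
    ring
  calc jb (a + b) ^ (2*σ) * jb a ^ (-(2*σ))
      ≤ ((Real.sqrt 2) ^ (2*σ) * (jb a ^ (2*σ) * jb b ^ (2*σ))) * jb a ^ (-(2*σ)) :=
        mul_le_mul_of_nonneg_right h3 (jb_rpow_nonneg _ _)
    _ = 2 ^ σ * jb b ^ (2*σ) * (jb a ^ (2*σ) * jb a ^ (-(2*σ))) := by rw [h4]; ring
    _ = 2 ^ σ * jb b ^ (2*σ) := by
        rw [← Real.rpow_add (jb_pos a)]
        simp

/-- off-diagonal case `m ≠ k` of the bilinear estimate.  For `σ ≥ 0` and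
`0 < ε < 1/8` there is `C > 0` such that for all integers `m ≠ k` and all `τ ∈ ℝ`,
`∑_{n∈ℤ} ⟨n+m⟩^{2σ} ⟨n⟩^{-2σ} ⟨-τ+(n+k)²+n²⟩^{-(1-2ε)} ⟨τ-(n+k)²+m²+(n+m)²⟩^{-(1+2ε)}
  ≤ C ⟨m⟩^{2σ - (4/3)(1-4ε)}`. -/
theorem stmt13 (σ ε : ℝ) (hσ : 0 ≤ σ) (hε0 : 0 < ε) (hε : ε < 1 / 8) :
    ∃ C : ℝ, 0 < C ∧ ∀ (m k : ℤ), m ≠ k → ∀ τ : ℝ,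
      (∑' n : ℤ,
          jb ((n : ℝ) + (m : ℝ)) ^ (2 * σ) * jb (n : ℝ) ^ (-(2 * σ)) *
            jb (-τ + ((n : ℝ) + (k : ℝ)) ^ 2 + (n : ℝ) ^ 2) ^ (-(1 - 2 * ε)) *
            jb (τ - ((n : ℝ) + (k : ℝ)) ^ 2 + (m : ℝ) ^ 2 + ((n : ℝ) + (m : ℝ)) ^ 2)
              ^ (-(1 + 2 * ε)))
        ≤ C * jb (m : ℝ) ^ (2 * σ - (4 / 3) * (1 - 4 * ε)) := by
  obtain ⟨α, hαdef⟩ : ∃ α : ℝ, α = (2/3) * (1 - 4*ε) := ⟨_, rfl⟩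
  have hα0 : 0 < α := by rw [hαdef]; nlinarith
  have hαγ : α ≤ 1 - 2*ε := by rw [hαdef]; nlinarith
  have hαp : α ≤ 1 + 2*ε := by linarith
  obtain ⟨K₁, hK₁, hKc₁⟩ := quad_sum (γ := 1 - 2*ε) (by linarith)
  obtain ⟨K₂, hK₂, hKc₂⟩ := lin_sum (p := 1 + 2*ε) (by linarith)
  refine ⟨2 ^ σ * 4 ^ α * (K₁ + K₂), by positivity, fun m k hmk τ => ?_⟩
  obtain ⟨hg₁s, hg₁b⟩ := hKc₁ k ((k:ℝ)^2 - τ)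
  have hd : 2 * (m - k) ≠ 0 := by
    simp only [ne_eq, mul_eq_zero, sub_eq_zero]
    push_neg
    exact ⟨by norm_num, hmk⟩
  obtain ⟨hg₂s, hg₂b⟩ := hKc₂ (2*(m-k)) hd (τ + 2*(m:ℝ)^2 - (k:ℝ)^2)
  -- abbreviations
  set g₁ : ℤ → ℝ := fun n => jb (2 * (n:ℝ)^2 + 2 * (k:ℝ) * n + ((k:ℝ)^2 - τ)) ^ (-(1 - 2*ε)) with hg₁
  set g₂ : ℤ → ℝ := fun n =>
    jb (((2*(m-k):ℤ):ℝ) * n + (τ + 2*(m:ℝ)^2 - (k:ℝ)^2)) ^ (-(1 + 2*ε)) with hg₂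
  have e₁ : ∀ n : ℤ, -τ + ((n:ℝ) + (k:ℝ))^2 + (n:ℝ)^2
      = 2 * (n:ℝ)^2 + 2 * (k:ℝ) * n + ((k:ℝ)^2 - τ) := by intro n; ring
  have e₂ : ∀ n : ℤ, τ - ((n:ℝ) + (k:ℝ))^2 + (m:ℝ)^2 + ((n:ℝ) + (m:ℝ))^2
      = ((2*(m-k):ℤ):ℝ) * n + (τ + 2*(m:ℝ)^2 - (k:ℝ)^2) := by intro n; push_cast; ring
  set M : ℝ := jb (m:ℝ) with hM
  -- pointwise bound
  have key : ∀ n : ℤ,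
      jb ((n : ℝ) + (m : ℝ)) ^ (2 * σ) * jb (n : ℝ) ^ (-(2 * σ)) *
        jb (-τ + ((n : ℝ) + (k : ℝ)) ^ 2 + (n : ℝ) ^ 2) ^ (-(1 - 2 * ε)) *
        jb (τ - ((n : ℝ) + (k : ℝ)) ^ 2 + (m : ℝ) ^ 2 + ((n : ℝ) + (m : ℝ)) ^ 2) ^ (-(1 + 2 * ε))
      ≤ (2 ^ σ * M ^ (2*σ)) * (4 ^ α * M ^ (-(2*α)) * (g₁ n + g₂ n)) := by
    intro n
    obtain ⟨R₁, hR₁⟩ : ∃ R₁, R₁ = -τ + ((n:ℝ) + (k:ℝ))^2 + (n:ℝ)^2 := ⟨_, rfl⟩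
    obtain ⟨R₂, hR₂⟩ : ∃ R₂, R₂ = τ - ((n:ℝ) + (k:ℝ))^2 + (m:ℝ)^2 + ((n:ℝ) + (m:ℝ))^2 := ⟨_, rfl⟩
    have hsum12 : (m:ℝ)^2 ≤ R₁ + R₂ := by
      rw [hR₁, hR₂]
      nlinarith [sq_nonneg ((n:ℝ)), sq_nonneg ((n:ℝ) + (m:ℝ))]
    have hcase : (m:ℝ)^2/2 ≤ |R₁| ∨ (m:ℝ)^2/2 ≤ |R₂| := by
      by_contra hcon
      push_neg at hcon
      have := le_abs_self R₁
      have := le_abs_self R₂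
      obtain ⟨h1, h2⟩ := hcon
      linarith
    -- in either case the big bracket dominates M^2/4
    have hbig : ∀ R : ℝ, (m:ℝ)^2/2 ≤ |R| → M ^ (2:ℕ) / 4 ≤ jb R := by
      intro R hR
      have ha : max 1 (|R|) ≤ jb R := max_le (one_le_jb R) (abs_le_jb R)
      have hb : (1 + (m:ℝ)^2) / 4 ≤ max 1 (|R|) := by
        rcases le_total ((m:ℝ)^2) 3 with h | h
        · exact le_trans (by linarith) (le_max_left _ _)
        · exact le_trans (by linarith : (1 + (m:ℝ)^2)/4 ≤ (m:ℝ)^2/2)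
            (le_trans hR (le_max_right _ _))
      rw [hM, jb_sq]
      linarith
    -- bound on the product of the two brackets
    have hbr : jb R₁ ^ (-(1 - 2*ε)) * jb R₂ ^ (-(1 + 2*ε))
        ≤ 4 ^ α * M ^ (-(2*α)) * (g₁ n + g₂ n) := by
      have hg₁n : jb R₁ ^ (-(1 - 2*ε)) = g₁ n := by rw [hg₁, hR₁, e₁ n]
      have hg₂n : jb R₂ ^ (-(1 + 2*ε)) = g₂ n := by rw [hg₂, hR₂, e₂ n]
      have hMpos : (0:ℝ) < M ^ (2:ℕ) / 4 := div_pos (pow_pos (jb_pos _) 2) (by norm_num)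
      rcases hcase with hc | hc
      · -- R₁ is big
        have h5 : jb R₁ ^ (-(1 - 2*ε)) ≤ 4 ^ α * M ^ (-(2*α)) := by
          have hsplit : jb R₁ ^ (-(1 - 2*ε)) = jb R₁ ^ (-α) * jb R₁ ^ (-(1 - 2*ε - α)) := by
            rw [← Real.rpow_add (jb_pos _)]; ring_nf
          rw [hsplit]
          have h6 : jb R₁ ^ (-α) ≤ (M ^ (2:ℕ) / 4) ^ (-α) :=
            Real.rpow_le_rpow_of_nonpos hMpos (hbig R₁ hc) (by linarith)
          have h7 : jb R₁ ^ (-(1 - 2*ε - α)) ≤ 1 :=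
            Real.rpow_le_one_of_one_le_of_nonpos (one_le_jb _) (by linarith)
          calc jb R₁ ^ (-α) * jb R₁ ^ (-(1 - 2*ε - α))
              ≤ (M ^ (2:ℕ) / 4) ^ (-α) * 1 :=
                mul_le_mul h6 h7 (jb_rpow_nonneg _ _) (Real.rpow_nonneg hMpos.le _)
            _ = 4 ^ α * M ^ (-(2*α)) := by rw [mul_one, jb_sq_div_rpow]; norm_num
        calc jb R₁ ^ (-(1 - 2*ε)) * jb R₂ ^ (-(1 + 2*ε))
            ≤ (4 ^ α * M ^ (-(2*α))) * g₂ n := by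
              rw [hg₂n]
              exact mul_le_mul_of_nonneg_right h5 (hg₂n ▸ jb_rpow_nonneg _ _)
          _ ≤ 4 ^ α * M ^ (-(2*α)) * (g₁ n + g₂ n) := by
              apply mul_le_mul_of_nonneg_left _ (mul_nonneg (by positivity) (jb_rpow_nonneg _ _))
              have : (0:ℝ) ≤ g₁ n := hg₁n ▸ jb_rpow_nonneg _ _
              linarith
      · -- R₂ is big
        have h5 : jb R₂ ^ (-(1 + 2*ε)) ≤ 4 ^ α * M ^ (-(2*α)) := by
          have hsplit : jb R₂ ^ (-(1 + 2*ε)) = jb R₂ ^ (-α) * jb R₂ ^ (-(1 + 2*ε - α)) := by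
            rw [← Real.rpow_add (jb_pos _)]; ring_nf
          rw [hsplit]
          have h6 : jb R₂ ^ (-α) ≤ (M ^ (2:ℕ) / 4) ^ (-α) :=
            Real.rpow_le_rpow_of_nonpos hMpos (hbig R₂ hc) (by linarith)
          have h7 : jb R₂ ^ (-(1 + 2*ε - α)) ≤ 1 :=
            Real.rpow_le_one_of_one_le_of_nonpos (one_le_jb _) (by linarith)
          calc jb R₂ ^ (-α) * jb R₂ ^ (-(1 + 2*ε - α))
              ≤ (M ^ (2:ℕ) / 4) ^ (-α) * 1 :=
                mul_le_mul h6 h7 (jb_rpow_nonneg _ _) (Real.rpow_nonneg hMpos.le _)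
            _ = 4 ^ α * M ^ (-(2*α)) := by rw [mul_one, jb_sq_div_rpow]; norm_num
        calc jb R₁ ^ (-(1 - 2*ε)) * jb R₂ ^ (-(1 + 2*ε))
            ≤ g₁ n * (4 ^ α * M ^ (-(2*α))) := by
              rw [hg₁n]
              exact mul_le_mul_of_nonneg_left h5 (hg₁n ▸ jb_rpow_nonneg _ _)
          _ ≤ 4 ^ α * M ^ (-(2*α)) * (g₁ n + g₂ n) := by
              rw [mul_comm]
              apply mul_le_mul_of_nonneg_left _ (mul_nonneg (by positivity) (jb_rpow_nonneg _ _))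
              have : (0:ℝ) ≤ g₂ n := hg₂n ▸ jb_rpow_nonneg _ _
              linarith
    have hpe := peetre (n:ℝ) (m:ℝ) hσ
    calc jb ((n : ℝ) + (m : ℝ)) ^ (2 * σ) * jb (n : ℝ) ^ (-(2 * σ)) *
          jb (-τ + ((n : ℝ) + (k : ℝ)) ^ 2 + (n : ℝ) ^ 2) ^ (-(1 - 2 * ε)) *
          jb (τ - ((n : ℝ) + (k : ℝ)) ^ 2 + (m : ℝ) ^ 2 + ((n : ℝ) + (m : ℝ)) ^ 2) ^ (-(1 + 2 * ε))
        = (jb ((n : ℝ) + (m : ℝ)) ^ (2 * σ) * jb (n : ℝ) ^ (-(2 * σ))) *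
          (jb R₁ ^ (-(1 - 2*ε)) * jb R₂ ^ (-(1 + 2*ε))) := by rw [hR₁, hR₂]; ring
      _ ≤ (2 ^ σ * M ^ (2*σ)) * (4 ^ α * M ^ (-(2*α)) * (g₁ n + g₂ n)) := by
          apply mul_le_mul hpe hbr
          · exact mul_nonneg (jb_rpow_nonneg _ _) (jb_rpow_nonneg _ _)
          · exact mul_nonneg (by positivity) (jb_rpow_nonneg _ _)
  -- sum it up
  have hGs : Summable (fun n : ℤ =>
      (2 ^ σ * M ^ (2*σ)) * (4 ^ α * M ^ (-(2*α)) * (g₁ n + g₂ n))) :=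
    (((hg₁s.add hg₂s).mul_left _).mul_left _)
  have hfs : Summable (fun n : ℤ =>
      jb ((n : ℝ) + (m : ℝ)) ^ (2 * σ) * jb (n : ℝ) ^ (-(2 * σ)) *
        jb (-τ + ((n : ℝ) + (k : ℝ)) ^ 2 + (n : ℝ) ^ 2) ^ (-(1 - 2 * ε)) *
        jb (τ - ((n : ℝ) + (k : ℝ)) ^ 2 + (m : ℝ) ^ 2 + ((n : ℝ) + (m : ℝ)) ^ 2) ^ (-(1 + 2 * ε))) := by
    apply Summable.of_nonneg_of_le _ key hGs
    intro n
    exact mul_nonneg (mul_nonneg (mul_nonneg (jb_rpow_nonneg _ _) (jb_rpow_nonneg _ _))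
      (jb_rpow_nonneg _ _)) (jb_rpow_nonneg _ _)
  have hMfact : M ^ (2*σ) * M ^ (-(2*α)) = M ^ (2 * σ - (4/3) * (1 - 4*ε)) := by
    rw [← Real.rpow_add (jb_pos _)]
    congr 1
    rw [hαdef]; ring
  calc (∑' n : ℤ,
        jb ((n : ℝ) + (m : ℝ)) ^ (2 * σ) * jb (n : ℝ) ^ (-(2 * σ)) *
          jb (-τ + ((n : ℝ) + (k : ℝ)) ^ 2 + (n : ℝ) ^ 2) ^ (-(1 - 2 * ε)) *
          jb (τ - ((n : ℝ) + (k : ℝ)) ^ 2 + (m : ℝ) ^ 2 + ((n : ℝ) + (m : ℝ)) ^ 2) ^ (-(1 + 2 * ε)))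
      ≤ ∑' n : ℤ, (2 ^ σ * M ^ (2*σ)) * (4 ^ α * M ^ (-(2*α)) * (g₁ n + g₂ n)) :=
        Summable.tsum_le_tsum key hfs hGs
    _ = (2 ^ σ * M ^ (2*σ)) * (4 ^ α * M ^ (-(2*α)) * ((∑' n : ℤ, g₁ n) + ∑' n : ℤ, g₂ n)) := by
        rw [tsum_mul_left, tsum_mul_left, Summable.tsum_add hg₁s hg₂s]
    _ ≤ (2 ^ σ * M ^ (2*σ)) * (4 ^ α * M ^ (-(2*α)) * (K₁ + K₂)) := by
        apply mul_le_mul_of_nonneg_left _ (mul_nonneg (by positivity) (jb_rpow_nonneg _ _))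
        apply mul_le_mul_of_nonneg_left _ (mul_nonneg (by positivity) (jb_rpow_nonneg _ _))
        linarith
    _ = 2 ^ σ * 4 ^ α * (K₁ + K₂) * (M ^ (2*σ) * M ^ (-(2*α))) := by ring
    _ = 2 ^ σ * 4 ^ α * (K₁ + K₂) * jb (m:ℝ) ^ (2 * σ - (4/3) * (1 - 4*ε)) := by
        rw [hMfact, hM]
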